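/- Let N ≥ 1 and a_i, u_i, s_i > 0 for i = 1,…,N. Then min_{1≤i≤N} (u_i/(2(a_i+s_i))) / [ min_{1≤i≤N} (u_i/(2(a_i+s_i))) + max_{1≤i≤N} (a_i/(2(a_i+s_i))) ] ≤ min_{1≤i≤N} u_i/(a_i+u_i). -/
import Mathlib


/-- comparison of the scalar-parameter optimal exponent with the
vector-parameter optimal exponent `min_i u_i/(a_i+u_i)`. -/
theorem stmt_19 (N : ℕ) [NeZero N] (a u s : Fin N → ℝ)
    (ha : ∀ i, 0 < a i) (hu : ∀ i, 0 < u i) (hs : ∀ i, 0 < s i) :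
    (⨅ i, u i / (2 * (a i + s i))) /
        ((⨅ i, u i / (2 * (a i + s i))) + (⨆ i, a i / (2 * (a i + s i)))) ≤
      ⨅ i, u i / (a i + u i) := by
  set m := ⨅ i, u i / (2 * (a i + s i)) with hmdef
  set M := ⨆ i, a i / (2 * (a i + s i)) with hMdef
  have hbddb : BddBelow (Set.range fun i => u i / (2 * (a i + s i))) :=
    Set.Finite.bddBelow (Set.finite_range _)
  have hbdda : BddAbove (Set.range fun i => a i / (2 * (a i + s i))) :=
    Set.Finite.bddAbove (Set.finite_range _)
  obtain ⟨j, hj⟩ := exists_eq_ciInf_of_finite (f := fun i => u i / (2 * (a i + s i)))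
  have hm : 0 < m := by
    rw [hmdef, ← hj]
    have := ha j; have := hu j; have := hs j
    positivity
  have hM : 0 < M := by
    have h1 : a ⟨0, Nat.pos_of_ne_zero (NeZero.ne N)⟩ / (2 * (a _ + s _)) ≤ M :=
      le_ciSup hbdda _
    refine lt_of_lt_of_le ?_ h1
    have := ha ⟨0, Nat.pos_of_ne_zero (NeZero.ne N)⟩
    have := hs ⟨0, Nat.pos_of_ne_zero (NeZero.ne N)⟩
    positivity
  refine le_ciInf fun i => ?_
  have hc : 0 < 2 * (a i + s i) := by have := ha i; have := hs i; positivity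
  have h1 : m ≤ u i / (2 * (a i + s i)) := ciInf_le hbddb i
  have h2 : a i / (2 * (a i + s i)) ≤ M := le_ciSup hbdda i
  have hai := ha i; have hui := hu i
  rw [div_le_div_iff₀ (by linarith) (by linarith)]
  have key : m * a i ≤ u i * M := by
    calc m * a i ≤ (u i / (2 * (a i + s i))) * a i := by nlinarith
      _ = u i * (a i / (2 * (a i + s i))) := by ring
      _ ≤ u i * M := by nlinarith
  nlinarith
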